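/- Let λ_M, λ_S > 0, α_M, α_S > 0, c > 0, and let X_M, X_S be independent with densities f_{X_k}(x) = 2πλ_k x exp(−πλ_k x²) on [0,∞). Define p = P(X_M < c^{1/α_M} X_S^{α_S/α_M}) and assume p > 0. Then the conditional density of X_M given the event {X_M < c^{1/α_M} X_S^{α_S/α_M}} is f(x) = exp(−πλ_S c^{−2/α_S} x^{2α_M/α_S}) · 2πλ_M x exp(−πλ_M x²) / p for x ≥ 0. -/

import Mathlib

/-!
By independence the law of `(X_M, X_S)` is the product of the marginals, so restricting `ℙ` to
the event and pushing forward along `X_M` reweights the law of `X_M` by the section probability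
`x ↦ ℙ(x < c^{1/α_M} X_S^{α_S/α_M})`. For `x ≥ 0` this is, up to the null event `X_S ≤ 0`,
the Rayleigh tail `ℙ(X_S > t) = exp(-πλ_S t²)` at `t = (x c^{-1/α_M})^{α_M/α_S}`, where
`t² = c^{-2/α_S} x^{2α_M/α_S}`. Conditioning divides by `p`.
-/

open MeasureTheory ProbabilityTheory Real Set

noncomputable def rayleighPdf (lam x : ℝ) : ℝ :=
  if 0 ≤ x then 2 * π * lam * x * Real.exp (-(π * lam * x ^ 2)) else 0

theorem map_restrict_preimage_prodMk_of_indepFun {Ω α β : Type*} [MeasurableSpace Ω]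
    [MeasurableSpace α] [MeasurableSpace β] {P : Measure Ω} [IsFiniteMeasure P]
    {X : Ω → α} {Y : Ω → β} (hX : Measurable X) (hY : Measurable Y) (hXY : IndepFun X Y P)
    {B : Set (α × β)} (hB : MeasurableSet B) :
    (P.restrict ((fun ω => (X ω, Y ω)) ⁻¹' B)).map X =
      (P.map X).withDensity fun x => P.map Y (Prod.mk x ⁻¹' B) := by
  ext A hA
  have hAB : MeasurableSet (Prod.fst ⁻¹' A ∩ B) := (measurable_fst hA).inter hB
  rw [Measure.map_apply hX hA, Measure.restrict_apply (hX hA), withDensity_apply _ hA,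
    show X ⁻¹' A ∩ (fun ω => (X ω, Y ω)) ⁻¹' B = (fun ω => (X ω, Y ω)) ⁻¹' (Prod.fst ⁻¹' A ∩ B)
      from rfl,
    ← Measure.map_apply (hX.prodMk hY) hAB,
    (indepFun_iff_map_prod_eq_prod_map_map hX.aemeasurable hY.aemeasurable).1 hXY,
    Measure.prod_apply hAB, ← lintegral_indicator hA]
  congr 1 with x
  by_cases hx : x ∈ A <;> simp [hx, Set.preimage_preimage]

theorem pos_of_rayleighPdf_ne_zero {lam x : ℝ} (h : rayleighPdf lam x ≠ 0) : 0 < x := by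
  unfold rayleighPdf at h
  split_ifs at h with hx
  · exact hx.lt_of_ne (by rintro rfl; simp at h)
  · exact absurd rfl h

theorem measurable_rayleighPdf (lam : ℝ) : Measurable (rayleighPdf lam) :=
  Measurable.ite measurableSet_Ici (by fun_prop) measurable_const

theorem hasDerivAt_neg_exp_neg_mul_sq (lam y : ℝ) :
    HasDerivAt (fun y : ℝ => -Real.exp (-(π * lam * y ^ 2)))
      (2 * π * lam * y * Real.exp (-(π * lam * y ^ 2))) y :=
  (((hasDerivAt_pow 2 y).const_mul (π * lam)).fun_neg.exp).fun_neg.congr_deriv (by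
    push_cast
    ring)

theorem lintegral_Ioi_rayleighPdf {lam : ℝ} (hlam : 0 < lam) {t : ℝ} (ht : 0 ≤ t) :
    ∫⁻ y in Ioi t, ENNReal.ofReal (rayleighPdf lam y) =
      ENNReal.ofReal (Real.exp (-(π * lam * t ^ 2))) := by
  have hnonneg : ∀ y ∈ Ioi t, 0 ≤ 2 * π * lam * y * Real.exp (-(π * lam * y ^ 2)) :=
    fun y hy => by have : 0 ≤ y := ht.trans hy.le; positivity
  have hlim : Filter.Tendsto (fun y : ℝ => -Real.exp (-(π * lam * y ^ 2))) Filter.atTop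
      (nhds 0) := by
    have h := ((Filter.tendsto_pow_atTop two_ne_zero).const_mul_atTop
      (mul_pos pi_pos hlam))
    simpa using (tendsto_exp_atBot.comp (Filter.tendsto_neg_atTop_atBot.comp h)).neg
  have hderiv := fun y (_ : y ∈ Ici t) => hasDerivAt_neg_exp_neg_mul_sq lam y
  rw [setLIntegral_congr_fun measurableSet_Ioi
      (fun y hy => by rw [rayleighPdf, if_pos (ht.trans hy.le)]),
    ← ofReal_integral_eq_lintegral_ofReal (integrableOn_Ioi_deriv_of_nonneg' hderiv hnonneg hlim)
      ((ae_restrict_iff' measurableSet_Ioi).2 (Filter.Eventually.of_forall hnonneg)),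
    integral_Ioi_of_hasDerivAt_of_nonneg' hderiv hnonneg hlim]
  simp

noncomputable def rayleighMeasure (lam : ℝ) : Measure ℝ :=
  volume.withDensity fun x => ENNReal.ofReal (rayleighPdf lam x)

theorem rayleighMeasure_Ioi {lam : ℝ} (hlam : 0 < lam) {t : ℝ} (ht : 0 ≤ t) :
    rayleighMeasure lam (Ioi t) = ENNReal.ofReal (Real.exp (-(π * lam * t ^ 2))) := by
  rw [rayleighMeasure, withDensity_apply _ measurableSet_Ioi, lintegral_Ioi_rayleighPdf hlam ht]

theorem ae_pos_rayleighMeasure (lam : ℝ) : ∀ᵐ y ∂rayleighMeasure lam, 0 < y :=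
  (ae_withDensity_iff (measurable_rayleighPdf lam).ennreal_ofReal).2 <|
    Filter.Eventually.of_forall fun _ hy =>
      pos_of_rayleighPdf_ne_zero fun h => hy (by rw [h, ENNReal.ofReal_zero])

theorem lt_mul_rpow_iff {a r x y : ℝ} (ha : 0 < a) (hr : 0 < r) (hx : 0 ≤ x) (hy : 0 ≤ y) :
    x < a * y ^ r ↔ (x / a) ^ r⁻¹ < y := by
  rw [Real.rpow_inv_lt_iff_of_pos (div_nonneg hx ha.le) hy hr, div_lt_iff₀' ha]

theorem rayleighMeasure_lt_mul_rpow {lam a r x : ℝ} (hlam : 0 < lam) (ha : 0 < a) (hr : 0 < r)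
    (hx : 0 ≤ x) :
    rayleighMeasure lam {y | x < a * y ^ r} =
      ENNReal.ofReal (Real.exp (-(π * lam * ((x / a) ^ r⁻¹) ^ 2))) := by
  rw [← rayleighMeasure_Ioi hlam (by positivity)]
  -- `y ^ r` is junk for `y < 0`, but the Rayleigh law lives on `(0, ∞)`.
  refine measure_congr ?_
  filter_upwards [ae_pos_rayleighMeasure lam] with y hy
  exact propext (lt_mul_rpow_iff ha hr hx hy.le)

theorem div_rpow_one_div_rpow_inv_sq {c a b x : ℝ} (hc : 0 < c) (ha : a ≠ 0) (hb : b ≠ 0)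
    (hx : 0 ≤ x) :
    ((x / c ^ (1 / a)) ^ (b / a)⁻¹) ^ 2 = c ^ (-(2 / b)) * x ^ (2 * a / b) := by
  rw [Real.div_rpow hx (by positivity), ← Real.rpow_mul hc.le, ← Real.rpow_natCast,
    Real.div_rpow (by positivity) (by positivity), ← Real.rpow_mul hx, ← Real.rpow_mul hc.le,
    Real.rpow_neg hc.le, div_eq_mul_inv, mul_comm]
  push_cast
  congr 2 <;> field_simp

theorem stmt8_general {Ω : Type*} [MeasureSpace Ω] [IsProbabilityMeasure (ℙ : Measure Ω)]
    (lamM lamS aM aS c : ℝ) (hlamS : 0 < lamS)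
    (haM : 0 < aM) (haS : 0 < aS) (hc : 0 < c)
    (XM XS : Ω → ℝ) (hXM : Measurable XM) (hXS : Measurable XS)
    (hindep : IndepFun XM XS ℙ)
    (hdM : Measure.map XM ℙ = volume.withDensity fun x => ENNReal.ofReal (rayleighPdf lamM x))
    (hdS : Measure.map XS ℙ = volume.withDensity fun x => ENNReal.ofReal (rayleighPdf lamS x))
    (p : ℝ)
    (hp : p = (ℙ {ω | XM ω < c ^ (1 / aM) * XS ω ^ (aS / aM)}).toReal)
    (hppos : 0 < p) :
    Measure.map XM (ℙ[|{ω | XM ω < c ^ (1 / aM) * XS ω ^ (aS / aM)}])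
      = volume.withDensity fun x => ENNReal.ofReal
          (if 0 ≤ x then
            Real.exp (-(π * lamS * c ^ (-(2 / aS)) * x ^ (2 * aM / aS)))
              * (2 * π * lamM * x * Real.exp (-(π * lamM * x ^ 2))) / p
          else 0) := by
  have hB : MeasurableSet {q : ℝ × ℝ | q.1 < c ^ (1 / aM) * q.2 ^ (aS / aM)} :=
    measurableSet_lt (by fun_prop) (by fun_prop)
  have hpdf := (measurable_rayleighPdf lamM).ennreal_ofReal
  have hsection := measurable_measure_prodMk_left (ν := Measure.map XS ℙ) hB
  have hE : ℙ {ω | XM ω < c ^ (1 / aM) * XS ω ^ (aS / aM)} = ENNReal.ofReal p := by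
    rw [hp, ENNReal.ofReal_toReal (measure_ne_top _ _)]
  rw [ProbabilityTheory.cond, Measure.map_smul, hE,
    show {ω | XM ω < c ^ (1 / aM) * XS ω ^ (aS / aM)} = (fun ω => (XM ω, XS ω)) ⁻¹'
      {q : ℝ × ℝ | q.1 < c ^ (1 / aM) * q.2 ^ (aS / aM)} from rfl,
    map_restrict_preimage_prodMk_of_indepFun hXM hXS hindep hB,
    hdM, ← withDensity_mul _ hpdf hsection, ← withDensity_smul _ (hpdf.mul hsection)]
  congr 1 with x
  simp only [Pi.smul_apply, Pi.mul_apply, smul_eq_mul]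
  rcases lt_or_ge x 0 with hx | hx
  · simp [rayleighPdf, hx.not_ge]
  have hsurv : Measure.map XS ℙ (Prod.mk x ⁻¹' {q : ℝ × ℝ | q.1 < c ^ (1 / aM) * q.2 ^ (aS / aM)})
      = ENNReal.ofReal (Real.exp (-(π * lamS * ((x / c ^ (1 / aM)) ^ (aS / aM)⁻¹) ^ 2))) := by
    rw [hdS]
    exact rayleighMeasure_lt_mul_rpow hlamS (by positivity) (by positivity) hx
  rw [hsurv, div_rpow_one_div_rpow_inv_sq hc haM.ne' haS.ne' hx, rayleighPdf, if_pos hx, if_pos hx,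
    ← ENNReal.ofReal_mul' (exp_nonneg _), ENNReal.ofReal_div_of_pos hppos,
    ENNReal.div_eq_inv_mul, mul_comm (rexp _), mul_assoc (π * lamS)]

/-- Conditional serving-distance density for Case 1: given the event
`{X_M < c^{1/α_M} X_S^{α_S/α_M}}` of probability `p > 0`, the conditional density of `X_M` is
`f(x) = exp(−πλ_S c^{−2/α_S} x^{2α_M/α_S}) · 2πλ_M x exp(−πλ_M x²) / p` for `x ≥ 0`. -/
theorem stmt8 {Ω : Type*} [MeasureSpace Ω] [IsProbabilityMeasure (ℙ : Measure Ω)]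
    (lamM lamS aM aS c : ℝ) (hlamM : 0 < lamM) (hlamS : 0 < lamS)
    (haM : 0 < aM) (haS : 0 < aS) (hc : 0 < c)
    (XM XS : Ω → ℝ) (hXM : Measurable XM) (hXS : Measurable XS)
    (hindep : IndepFun XM XS ℙ)
    (hdM : Measure.map XM ℙ = volume.withDensity fun x => ENNReal.ofReal (rayleighPdf lamM x))
    (hdS : Measure.map XS ℙ = volume.withDensity fun x => ENNReal.ofReal (rayleighPdf lamS x))
    (p : ℝ)
    (hp : p = (ℙ {ω | XM ω < c ^ (1 / aM) * XS ω ^ (aS / aM)}).toReal)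
    (hppos : 0 < p) :
    Measure.map XM (ℙ[|{ω | XM ω < c ^ (1 / aM) * XS ω ^ (aS / aM)}])
      = volume.withDensity fun x => ENNReal.ofReal
          (if 0 ≤ x then
            Real.exp (-(π * lamS * c ^ (-(2 / aS)) * x ^ (2 * aM / aS)))
              * (2 * π * lamM * x * Real.exp (-(π * lamM * x ^ 2))) / p
          else 0) :=
  stmt8_general lamM lamS aM aS c hlamS haM haS hc XM XS hXM hXS hindep hdM hdS p hp hppos
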